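/- arXiv:math/0311058 — 2 statements merged into one kernel-verified Lean document; each statement's English description precedes it below -/
import Mathlib

section
/- For the bigraded vector space V = ℂ[x,y] with char V = 1/((1−t₁)(1−t₂)), setting t₁ = e^{ℏ} and t₂ = e^{−ℏ}, the logarithm of Σ_n q^n char(Symⁿ V) expands as −ℏ^{−2} Σ_{d≥1} q^d/d³ − (1/12) log(1−q) + Σ_{g≥2} (B_{2g}/(2g(2g−2)!)) (Σ_{d≥1} d^{2g−3} q^d) ℏ^{2g−2}, where B_{2g} are Bernoulli numbers. -/
open PowerSeries

/-- The Laurent series field `ℚ((ℏ))` in which the coefficients live. -/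
noncomputable abbrev LK := LaurentSeries ℚ

/-- `e^{cℏ}` as a Laurent series in `ℏ`. -/
noncomputable def expH (c : ℚ) : LK :=
  HahnSeries.ofPowerSeries ℤ ℚ (PowerSeries.rescale c (PowerSeries.exp ℚ))

/-- The variable `ℏ` (a Laurent series). -/
noncomputable def hbar : LK := HahnSeries.ofPowerSeries ℤ ℚ PowerSeries.X

/-- `log(1−q) = −Σ_{d≥1} q^d / d`, as a power series in `q` with coefficients in `ℚ((ℏ))`. -/
noncomputable def logOneSubQ : PowerSeries LK :=
  PowerSeries.mk fun d => if d = 0 then 0 else -((d : LK))⁻¹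

/-! With `B(t) = t/(eᵗ − 1)`, the function `U(t) = t B'(t) − B(t) = t² (d/dt)(eᵗ − 1)⁻¹` satisfies
`U(t) = t² / ((1 − eᵗ)(1 − e⁻ᵗ))`, and its `n`-th Taylor coefficient is `(n − 1) B_n / n!`.
Substituting `t = dℏ` and dividing by `d`, the coefficient of `q^d` is
`U(dℏ) / (d³ℏ²) = −1/(d³ℏ²) + B₂/(2d) + Σ_{n ≥ 3} (n − 1) B_n dⁿ⁻³ ℏⁿ⁻² / n!`; here `B₂/2 = 1/12`
gives the `log(1 − q)` term, odd `n ≥ 3` contribute nothing, and `n = 2g` is the genus-`g` term. -/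

namespace PowerSeries

variable (A : Type*) [CommRing A] [Algebra ℚ A]

noncomputable def genusSeries : A⟦X⟧ :=
  X * d⁄dX A (bernoulliPowerSeries A) - bernoulliPowerSeries A

theorem coeff_genusSeries (n : ℕ) :
    coeff n (genusSeries A) = algebraMap ℚ A (((n : ℚ) - 1) * bernoulli n / n.factorial) := by
  rcases n with _ | n
  · simp [genusSeries, bernoulliPowerSeries]
  · rw [genusSeries, map_sub, coeff_succ_X_mul, coeff_derivative, bernoulliPowerSeries, coeff_mk,
      show ((n + 1 : ℕ) - 1 : ℚ) * bernoulli (n + 1) / (n + 1).factorial =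
        bernoulli (n + 1) / (n + 1).factorial * n by push_cast; ring, map_mul, map_natCast]
    ring

theorem derivative_bernoulliPowerSeries_mul_exp_sub_one_add :
    d⁄dX A (bernoulliPowerSeries A) * (exp A - 1) + bernoulliPowerSeries A * exp A = 1 := by
  have h := congrArg (d⁄dX A) (bernoulliPowerSeries_mul_exp_sub_one A)
  simpa only [Derivation.leibniz, map_sub, Derivation.map_one_eq_zero, derivative_exp,
    derivative_X, smul_eq_mul, sub_zero, add_comm, mul_comm] using h

theorem genusSeries_mul_exp_sub_one_sq :
    genusSeries A * (exp A - 1) ^ 2 = -(X ^ 2 * exp A) := by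
  rw [genusSeries]
  linear_combination (X * (exp A - 1)) * derivative_bernoulliPowerSeries_mul_exp_sub_one_add A
    + (-(exp A - 1) - X * exp A) * bernoulliPowerSeries_mul_exp_sub_one A

variable {A}

theorem rescale_exp_mul_rescale_neg_exp (r : A) :
    rescale r (exp A) * rescale (-r) (exp A) = 1 := by
  rw [exp_mul_exp_eq_exp_add, add_neg_cancel, rescale_zero, RingHom.comp_apply,
    constantCoeff_exp, map_one]

theorem rescale_genusSeries_mul_one_sub_exp_mul_one_sub_exp_neg (r : A) :
    rescale r (genusSeries A) * ((1 - rescale r (exp A)) * (1 - rescale (-r) (exp A))) =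
      (C r * X) ^ 2 := by
  have h := congrArg (rescale r) (genusSeries_mul_exp_sub_one_sq A)
  simp only [map_mul, map_neg, map_pow, map_sub, map_one, rescale_X] at h
  linear_combination (-rescale (-r) (exp A)) * h
    + ((C r * X) ^ 2 - rescale r (genusSeries A) * (1 - rescale r (exp A))) *
      rescale_exp_mul_rescale_neg_exp r

noncomputable def genusTail (r : ℚ) : ℚ⟦X⟧ :=
  mk fun n => if n ≠ 0 ∧ Even n then
    bernoulli (n + 2) / (((n : ℚ) + 2) * n.factorial) * r ^ (n - 1) else 0

theorem rescale_genusSeries (r : ℚ) :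
    rescale r (genusSeries ℚ) = C (r ^ 2 / 12) * X ^ 2 + C (r ^ 3) * (X ^ 2 * genusTail r) - 1 := by
  ext n
  rw [coeff_rescale, coeff_genusSeries, Algebra.algebraMap_self, RingHom.id_apply, map_sub,
    map_add, coeff_C_mul, coeff_C_mul, coeff_X_pow, coeff_X_pow_mul', coeff_one, genusTail]
  rcases n with _ | _ | _ | m
  · simp
  · simp
  · norm_num [bernoulli_two, Nat.factorial]
    ring
  · rw [if_neg (by omega), if_pos (by omega), if_neg (by omega), coeff_mk,
      show m + 3 - 2 = m + 1 by omega]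
    split_ifs with h
    · rw [Nat.factorial_succ (m + 2), Nat.factorial_succ (m + 1)]
      push_cast
      field_simp
      ring
    · rw [bernoulli_eq_zero_of_odd (by grind) (by omega)]
      simp

end PowerSeries

instance HahnSeries.instCharZero {Γ R : Type*} [AddCommMonoid Γ] [PartialOrder Γ]
    [IsOrderedCancelAddMonoid Γ] [NonAssocSemiring R] [CharZero R] : CharZero (HahnSeries Γ R) :=
  charZero_of_injective_ringHom HahnSeries.C_injective

theorem hbar_ne_zero : hbar ≠ 0 :=
  (map_ne_zero_iff _ HahnSeries.ofPowerSeries_injective).mpr X_ne_zero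

theorem inv_one_sub_expH_mul_one_sub_expH_neg {r : ℚ} (hr : r ≠ 0) :
    ((1 - expH r) * (1 - expH (-r)))⁻¹ =
      HahnSeries.ofPowerSeries ℤ ℚ (rescale r (genusSeries ℚ)) / ((r : LK) * hbar) ^ 2 := by
  have h := congrArg (HahnSeries.ofPowerSeries ℤ ℚ)
    (rescale_genusSeries_mul_one_sub_exp_mul_one_sub_exp_neg r)
  simp only [map_mul, map_sub, map_one, map_pow, HahnSeries.ofPowerSeries_C,
    eq_ratCast (HahnSeries.C (Γ := ℤ) (R := ℚ))] at h
  refine inv_eq_of_mul_eq_one_right ?_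
  rw [mul_div_assoc', mul_comm, expH, expH, h]
  exact div_self (pow_ne_zero 2 (mul_ne_zero (Rat.cast_ne_zero.mpr hr) hbar_ne_zero))

theorem inv_mul_inv_one_sub_expH_mul_one_sub_expH_neg {r : ℚ} (hr : r ≠ 0) :
    (r : LK)⁻¹ * ((1 - expH r) * (1 - expH (-r)))⁻¹ =
      -((hbar ^ 2)⁻¹ * ((r : LK) ^ 3)⁻¹) - 12⁻¹ * -(r : LK)⁻¹
        + HahnSeries.ofPowerSeries ℤ ℚ (genusTail r) := by
  have h := congrArg (HahnSeries.ofPowerSeries ℤ ℚ) (rescale_genusSeries r)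
  simp only [map_add, map_sub, map_mul, map_one, map_pow, HahnSeries.ofPowerSeries_C,
    eq_ratCast (HahnSeries.C (Γ := ℤ) (R := ℚ))] at h
  push_cast at h
  rw [inv_one_sub_expH_mul_one_sub_expH_neg hr, h, hbar]
  field_simp
  ring

/-- The Laurent expansion in `ℏ` of the generating function
`Σ_{d≥1} q^d / (d (1−e^{ℏd})(1−e^{−ℏd}))` (the logarithm of `Σ_n qⁿ char Symⁿ ℂ[x,y]` at
`t₁ = e^ℏ`, `t₂ = e^{−ℏ}`):
it equals `−ℏ^{−2} Σ_{d≥1} q^d/d³ − (1/12) log(1−q)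
          + Σ_{g≥2} (B_{2g}/(2g(2g−2)!)) (Σ_{d≥1} d^{2g−3} q^d) ℏ^{2g−2}`,
stated as an identity of power series in `q` with coefficients in `ℚ((ℏ))`; the sum over
`g ≥ 2` is recorded coefficient-wise by the substitution `n = 2g − 2`. -/
theorem genus_expansion_symmetric_products :
    (PowerSeries.mk fun d => if d = 0 then 0 else
        ((d : LK))⁻¹ * (((1 : LK) - expH d) * ((1 : LK) - expH (-d)))⁻¹) =
    -(PowerSeries.C (R := LK) ((hbar ^ 2)⁻¹)) *
        (PowerSeries.mk fun d => if d = 0 then 0 else (((d : LK)) ^ 3)⁻¹)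
      - PowerSeries.C (R := LK) (12 : LK)⁻¹ * logOneSubQ
      + PowerSeries.mk (fun d => if d = 0 then 0 else
          HahnSeries.ofPowerSeries ℤ ℚ (PowerSeries.mk fun n =>
            if n ≠ 0 ∧ Even n then
              bernoulli (n + 2) / (((n : ℚ) + 2) * n.factorial) * (d : ℚ) ^ (n - 1)
            else 0)) := by
  refine PowerSeries.ext fun d => ?_
  rcases eq_or_ne d 0 with rfl | hd
  · simp [logOneSubQ]
  · have h := inv_mul_inv_one_sub_expH_mul_one_sub_expH_neg (Nat.cast_ne_zero.mpr hd : (d : ℚ) ≠ 0)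
    rw [Rat.cast_natCast] at h
    simp only [map_add, map_sub, neg_mul, map_neg, coeff_mk, coeff_C_mul, logOneSubQ, if_neg hd]
    rw [h, genusTail]
end

section
/- Jacobi theta function identity: for |q| < 1, θ₀₁(0,τ) = ∏_{d=1}^∞ (1−q^{2d})(1−q^{2d−1})², where θ₀₁(0,τ) = Σ_{n∈ℤ} (−1)ⁿ q^{n²} and q = e^{πiτ}. -/
/-!
Gauss's q-binomial theorem `∏_{l<m} (1 + a^l z) = ∑_k [m, k]_a a^(k choose 2) z^k`, taken at
`m = 2N`, `a = q²`, `z = -q^(1-2N)`, gives the finite form of the identity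
`∏_{j<N} (1 - q^(2j+2)) (1 - q^(2j+1))² = ∑_{|n| ≤ N} (-1)^n q^(n²) (q²; q²)_N [2N, N+n]_{q²}`.
The coefficient `(q²; q²)_N [2N, N+n]_{q²}` is a product of `N` factors `1 - q^(2i)` with
`i > N - |n|`, so it is bounded uniformly in `N` and tends to `1`; dominated convergence for
series (Tannery's theorem) then lets `N → ∞` on both sides.
-/

open Finset Filter Topology

section CommRing

variable {R : Type*} [CommRing R] (a : R)

/-- The q-Pochhammer symbol `(a; a)_m`. -/
def qPochhammer (m : ℕ) : R := ∏ i ∈ Ico 1 (m + 1), (1 - a ^ i)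

/-- The Gaussian binomial coefficient `[m, k]_a`. -/
def gaussBinom : ℕ → ℕ → R
  | _, 0 => 1
  | 0, _ + 1 => 0
  | m + 1, k + 1 => gaussBinom m k + a ^ (k + 1) * gaussBinom m (k + 1)

/-- The coefficient of `(-1) ^ n * x ^ (n ^ 2)` in `∏_{j<N} (1 - x^(2j+2)) (1 - x^(2j+1))^2`,
where `a = x ^ 2`. -/
def thetaCoeff (N : ℕ) (n : ℤ) : R :=
  if n.natAbs ≤ N then qPochhammer a N * gaussBinom a (2 * N) (n + N).toNat else 0

@[simp]
lemma qPochhammer_zero : qPochhammer a 0 = 1 := by simp [qPochhammer]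

lemma qPochhammer_succ (m : ℕ) :
    qPochhammer a (m + 1) = qPochhammer a m * (1 - a ^ (m + 1)) :=
  prod_Ico_succ_top (by omega) _

lemma qPochhammer_mul_prod_Ico {m n : ℕ} (h : m ≤ n) :
    qPochhammer a m * ∏ i ∈ Ico (m + 1) (n + 1), (1 - a ^ i) = qPochhammer a n :=
  prod_Ico_consecutive _ (by omega) (by omega)

@[simp]
lemma gaussBinom_zero_right (m : ℕ) : gaussBinom a m 0 = 1 := by
  cases m <;> rfl

lemma gaussBinom_succ_succ (m k : ℕ) :
    gaussBinom a (m + 1) (k + 1) = gaussBinom a m k + a ^ (k + 1) * gaussBinom a m (k + 1) :=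
  rfl

lemma gaussBinom_eq_zero_of_lt {m k : ℕ} (h : m < k) : gaussBinom a m k = 0 := by
  induction m generalizing k with
  | zero => obtain ⟨k, rfl⟩ := Nat.exists_eq_add_of_lt h; rfl
  | succ m ih =>
    obtain ⟨k, rfl⟩ := Nat.exists_eq_add_of_le' (Nat.one_le_of_lt h)
    rw [gaussBinom_succ_succ, ih (by omega), ih (by omega), mul_zero, add_zero]

theorem prod_one_add_pow_mul_eq_sum_gaussBinom (m : ℕ) (z : R) :
    ∏ l ∈ range m, (1 + a ^ l * z) =
      ∑ k ∈ range (m + 1), gaussBinom a m k * a ^ k.choose 2 * z ^ k := by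
  induction m generalizing z with
  | zero => simp
  | succ m ih =>
    have hprod : ∏ l ∈ range (m + 1), (1 + a ^ l * z) =
        (1 + z) * ∏ l ∈ range m, (1 + a ^ l * (a * z)) := by
      rw [prod_range_succ', mul_comm]
      simp [pow_succ, mul_assoc]
    have hone : ∑ k ∈ range (m + 1), gaussBinom a m k * a ^ k.choose 2 * (a * z) ^ k =
        1 + ∑ k ∈ range (m + 1),
          a ^ (k + 1) * gaussBinom a m (k + 1) * a ^ (k + 1).choose 2 * z ^ (k + 1) := by
      conv_rhs => rw [sum_range_succ, gaussBinom_eq_zero_of_lt a (Nat.lt_succ_self m)]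
      rw [sum_range_succ', add_comm]
      simp only [mul_zero, zero_mul, add_zero, gaussBinom_zero_right, Nat.choose_zero_succ,
        pow_zero, mul_one]
      exact congrArg _ (sum_congr rfl fun k _ => by ring)
    have hz : z * ∑ k ∈ range (m + 1), gaussBinom a m k * a ^ k.choose 2 * (a * z) ^ k =
        ∑ k ∈ range (m + 1), gaussBinom a m k * a ^ (k + 1).choose 2 * z ^ (k + 1) := by
      rw [mul_sum]
      refine sum_congr rfl fun k _ => ?_
      rw [Nat.choose_succ_succ', Nat.choose_one_right]
      ring
    rw [hprod, ih, add_mul, one_mul, hz, hone, sum_range_succ' _ (m + 1)]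
    simp only [gaussBinom_succ_succ, add_mul, sum_add_distrib, gaussBinom_zero_right,
      Nat.choose_zero_succ, pow_zero, mul_one]
    ring

theorem gaussBinom_add_mul_qPochhammer (i j : ℕ) :
    gaussBinom a (i + j) i * qPochhammer a i * qPochhammer a j = qPochhammer a (i + j) := by
  induction j generalizing i with
  | zero =>
    induction i with
    | zero => simp
    | succ i ih =>
      rw [add_zero] at ih ⊢
      rw [gaussBinom_succ_succ, gaussBinom_eq_zero_of_lt a (Nat.lt_succ_self i),
        qPochhammer_succ]
      linear_combination (1 - a ^ (i + 1)) * ih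
  | succ j ihj =>
    induction i with
    | zero => simp
    | succ i ih =>
      have h := ihj (i + 1)
      rw [show i + 1 + j = i + (j + 1) by ring, qPochhammer_succ a i] at h
      rw [qPochhammer_succ a j] at ih
      rw [show i + 1 + (j + 1) = i + (j + 1) + 1 by ring, gaussBinom_succ_succ,
        qPochhammer_succ a (i + (j + 1)), qPochhammer_succ a i, qPochhammer_succ a j]
      linear_combination (1 - a ^ (i + 1)) * ih + a ^ (i + 1) * (1 - a ^ (j + 1)) * h

lemma thetaCoeff_eq_zero {N : ℕ} {n : ℤ} (hn : N < n.natAbs) : thetaCoeff a N n = 0 :=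
  if_neg hn.not_ge

end CommRing

lemma two_mul_choose_two_add_self (k : ℕ) : 2 * k.choose 2 + k = k ^ 2 := by
  induction k with
  | zero => rfl
  | succ k ih => rw [Nat.choose_succ_succ', Nat.choose_one_right]; nlinarith

lemma sum_range_two_mul_add_one (N : ℕ) : ∑ i ∈ range N, (2 * i + 1) = N ^ 2 := by
  induction N with
  | zero => rfl
  | succ n ih => rw [sum_range_succ, ih]; ring

lemma sum_Icc_neg_eq_sum_range {M : Type*} [AddCommMonoid M] (f : ℤ → M) (N : ℕ) :
    ∑ n ∈ Icc (-N : ℤ) N, f n = ∑ k ∈ range (2 * N + 1), f (k - N) := by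
  rw [Int.Icc_eq_finset_map, sum_map, show ((N : ℤ) + 1 - -N).toNat = 2 * N + 1 by omega]
  exact sum_congr rfl fun k _ => by simp [neg_add_eq_sub]

section Field

variable {K : Type*} [Field K] {x : K}

lemma prod_range_two_mul_one_add_pow_mul (hx : x ≠ 0) (N : ℕ) :
    ∏ l ∈ range (2 * N), (1 + (x ^ 2) ^ l * -x ^ (1 - 2 * N : ℤ)) =
      (-1) ^ N * (x ^ (N ^ 2))⁻¹ * (∏ i ∈ range N, (1 - x ^ (2 * i + 1))) ^ 2 := by
  have hpow (l : ℕ) : (x ^ 2) ^ l * x ^ (1 - 2 * N : ℤ) = x ^ (2 * l + 1 - 2 * N : ℤ) := by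
    rw [← pow_mul, ← zpow_natCast, ← zpow_add₀ hx]; push_cast; ring_nf
  have hlow : ∏ l ∈ range N, (1 + (x ^ 2) ^ l * -x ^ (1 - 2 * N : ℤ)) =
      ∏ i ∈ range N, (-1 * (x ^ (2 * i + 1))⁻¹ * (1 - x ^ (2 * i + 1))) := by
    rw [← prod_range_reflect]
    refine prod_congr rfl fun i hi => ?_
    have hi : ((N - 1 - i : ℕ) : ℤ) = N - 1 - i := by have := mem_range.mp hi; omega
    rw [mul_neg, hpow, show (2 * (N - 1 - i : ℕ) + 1 - 2 * N : ℤ) = -(2 * i + 1 : ℕ) by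
      push_cast [hi]; ring, zpow_neg, zpow_natCast]
    field_simp
    ring
  have hhigh : ∏ i ∈ range N, (1 + (x ^ 2) ^ (N + i) * -x ^ (1 - 2 * N : ℤ)) =
      ∏ i ∈ range N, (1 - x ^ (2 * i + 1)) := by
    refine prod_congr rfl fun i _ => ?_
    rw [mul_neg, hpow, show (2 * (N + i : ℕ) + 1 - 2 * N : ℤ) = (2 * i + 1 : ℕ) by push_cast; ring,
      zpow_natCast, sub_eq_add_neg]
  rw [two_mul, prod_range_add, hlow, hhigh, prod_mul_distrib, prod_mul_distrib, prod_const,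
    card_range, prod_inv_distrib, prod_pow_eq_pow_sum, sum_range_two_mul_add_one]
  ring

lemma pow_choose_two_mul_pow_eq (hx : x ≠ 0) (N k : ℕ) :
    (x ^ 2) ^ k.choose 2 * (-x ^ (1 - 2 * N : ℤ)) ^ k =
      (-1) ^ N * (x ^ (N ^ 2))⁻¹ * ((-1) ^ ((k : ℤ) - N) * x ^ (((k : ℤ) - N) ^ 2)) := by
  have hsign : (-1 : K) ^ k = (-1) ^ N * (-1) ^ ((k : ℤ) - N) := by
    rw [← zpow_natCast, ← zpow_natCast, ← zpow_add₀ (by norm_num)]; ring_nf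
  have hpow : (x ^ 2) ^ k.choose 2 * (x ^ (1 - 2 * N : ℤ)) ^ k =
      (x ^ (N ^ 2))⁻¹ * x ^ (((k : ℤ) - N) ^ 2) := by
    have hchoose := two_mul_choose_two_add_self k
    rw [← pow_mul, ← zpow_natCast, ← zpow_natCast (x ^ (1 - 2 * N : ℤ)), ← zpow_mul,
      ← zpow_natCast x (N ^ 2), ← zpow_neg, ← zpow_add₀ hx, ← zpow_add₀ hx]
    congr 1
    zify at hchoose
    push_cast
    linear_combination hchoose
  rw [neg_pow, hsign]
  linear_combination (-1 : K) ^ N * (-1) ^ ((k : ℤ) - N) * hpow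

theorem sq_prod_one_sub_pow_odd (hx : x ≠ 0) (N : ℕ) :
    (∏ i ∈ range N, (1 - x ^ (2 * i + 1))) ^ 2 =
      ∑ n ∈ Icc (-N : ℤ) N, (-1) ^ n * x ^ (n ^ 2) * gaussBinom (x ^ 2) (2 * N) (n + N).toNat := by
  have h := prod_one_add_pow_mul_eq_sum_gaussBinom (x ^ 2) (2 * N) (-x ^ (1 - 2 * N : ℤ))
  simp_rw [mul_assoc, pow_choose_two_mul_pow_eq hx] at h
  rw [prod_range_two_mul_one_add_pow_mul hx] at h
  refine mul_left_cancel₀ (by simp [hx] : (-1 : K) ^ N * (x ^ (N ^ 2))⁻¹ ≠ 0) ?_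
  rw [h, sum_Icc_neg_eq_sum_range, mul_sum]
  refine sum_congr rfl fun k hk => ?_
  rw [show ((k : ℤ) - N + N).toNat = k by omega]
  ring

theorem prod_eq_sum_thetaCoeff (hx : x ≠ 0) (N : ℕ) :
    ∏ j ∈ range N, (1 - x ^ (2 * (j + 1))) * (1 - x ^ (2 * (j + 1) - 1)) ^ 2 =
      ∑ n ∈ Icc (-N : ℤ) N, (-1) ^ n * x ^ (n ^ 2) * thetaCoeff (x ^ 2) N n := by
  have hq : qPochhammer (x ^ 2) N = ∏ j ∈ range N, (1 - x ^ (2 * (j + 1))) := by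
    rw [qPochhammer, prod_Ico_eq_prod_range]
    simp [← pow_mul, add_comm]
  rw [prod_mul_distrib, prod_pow, ← hq]
  simp only [Nat.mul_succ, Nat.add_succ_sub_one]
  rw [sq_prod_one_sub_pow_odd hx, mul_sum]
  refine sum_congr rfl fun n hn => ?_
  rw [thetaCoeff, if_pos (by rw [mem_Icc] at hn; omega)]
  ring

lemma qPochhammer_ne_zero {a : K} (ha : ∀ i, 0 < i → a ^ i ≠ 1) (m : ℕ) : qPochhammer a m ≠ 0 :=
  prod_ne_zero_iff.mpr fun i hi => sub_ne_zero.mpr (ha i (by rw [mem_Ico] at hi; omega)).symm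

theorem thetaCoeff_eq_prod {a : K} (ha : ∀ i, 0 < i → a ^ i ≠ 1) {N : ℕ} {n : ℤ}
    (hn : n.natAbs ≤ N) :
    thetaCoeff a N n = (∏ i ∈ Ico (N + n.natAbs + 1) (2 * N + 1), (1 - a ^ i)) *
      ∏ i ∈ Ico (N - n.natAbs + 1) (N + 1), (1 - a ^ i) := by
  set k := (n + N).toNat
  have hpair : qPochhammer a k * qPochhammer a (2 * N - k) =
      qPochhammer a (N - n.natAbs) * qPochhammer a (N + n.natAbs) := by
    rcases le_total 0 n with h | h
    · rw [show k = N + n.natAbs by omega, show 2 * N - (N + n.natAbs) = N - n.natAbs by omega,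
        mul_comm]
    · rw [show k = N - n.natAbs by omega, show 2 * N - (N - n.natAbs) = N + n.natAbs by omega]
  have hbinom := gaussBinom_add_mul_qPochhammer a k (2 * N - k)
  rw [show k + (2 * N - k) = 2 * N by omega, mul_assoc, hpair] at hbinom
  have hlow := qPochhammer_mul_prod_Ico a (show N - n.natAbs ≤ N by omega)
  have hhigh := qPochhammer_mul_prod_Ico a (show N + n.natAbs ≤ 2 * N by omega)
  rw [thetaCoeff, if_pos hn]
  refine mul_right_cancel₀ (mul_ne_zero (qPochhammer_ne_zero ha (N - n.natAbs))
    (qPochhammer_ne_zero ha (N + n.natAbs))) ?_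
  linear_combination qPochhammer a N * hbinom - qPochhammer a (2 * N) * hlow -
    (∏ i ∈ Ico (N - n.natAbs + 1) (N + 1), (1 - a ^ i)) * qPochhammer a (N - n.natAbs) * hhigh

end Field

section Normed

variable {𝕜 : Type*} [NormedField 𝕜] {a : 𝕜}

lemma pow_ne_one_of_norm_lt_one (ha : ‖a‖ < 1) {i : ℕ} (hi : 0 < i) : a ^ i ≠ 1 := fun h => by
  simpa [h] using (norm_pow a i).trans_lt (pow_lt_one₀ (norm_nonneg a) ha hi.ne')

lemma norm_prod_Ico_one_sub_pow_sub_one_le (ha : ‖a‖ < 1) (lo hi : ℕ) :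
    ‖∏ i ∈ Ico lo hi, (1 - a ^ i) - 1‖ ≤ Real.exp (‖a‖ ^ lo / (1 - ‖a‖)) - 1 := by
  have h := norm_prod_one_add_sub_one_le (Ico lo hi) fun i => -a ^ i
  simp only [← sub_eq_add_neg, norm_neg, norm_pow] at h
  exact h.trans (sub_le_sub_right
    (Real.exp_le_exp.mpr (geom_sum_Ico_le_of_lt_one (norm_nonneg a) ha)) 1)

lemma norm_prod_Ico_one_sub_pow_le (ha : ‖a‖ < 1) (lo hi : ℕ) :
    ‖∏ i ∈ Ico lo hi, (1 - a ^ i)‖ ≤ Real.exp (1 / (1 - ‖a‖)) := by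
  have h := norm_le_norm_sub_add (∏ i ∈ Ico lo hi, (1 - a ^ i)) 1
  have hpow : ‖a‖ ^ lo ≤ 1 := pow_le_one₀ (norm_nonneg a) ha.le
  have hexp := Real.exp_le_exp.mpr (div_le_div_of_nonneg_right hpow (sub_nonneg.mpr ha.le))
  linarith [norm_prod_Ico_one_sub_pow_sub_one_le ha lo hi, norm_one (α := 𝕜)]

lemma tendsto_prod_Ico_one_sub_pow (ha : ‖a‖ < 1) {lo hi : ℕ → ℕ}
    (hlo : Tendsto lo atTop atTop) :
    Tendsto (fun N => ∏ i ∈ Ico (lo N) (hi N), (1 - a ^ i)) atTop (𝓝 1) := by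
  rw [tendsto_iff_norm_sub_tendsto_zero]
  refine squeeze_zero (fun _ => norm_nonneg _)
    (fun N => norm_prod_Ico_one_sub_pow_sub_one_le ha (lo N) (hi N)) ?_
  have h : Tendsto (fun N => ‖a‖ ^ lo N / (1 - ‖a‖)) atTop (𝓝 0) := by
    simpa using ((tendsto_pow_atTop_nhds_zero_of_lt_one (norm_nonneg a) ha).comp hlo).div_const
      (1 - ‖a‖)
  simpa using ((Real.continuous_exp.tendsto 0).comp h).sub_const 1

lemma norm_thetaCoeff_le (ha : ‖a‖ < 1) (N : ℕ) (n : ℤ) :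
    ‖thetaCoeff a N n‖ ≤ Real.exp (1 / (1 - ‖a‖)) ^ 2 := by
  rcases le_or_gt n.natAbs N with hn | hn
  · rw [thetaCoeff_eq_prod (fun i => pow_ne_one_of_norm_lt_one ha) hn, norm_mul, sq]
    exact mul_le_mul (norm_prod_Ico_one_sub_pow_le ha _ _) (norm_prod_Ico_one_sub_pow_le ha _ _)
      (norm_nonneg _) (Real.exp_nonneg _)
  · rw [thetaCoeff_eq_zero a hn, norm_zero]
    positivity

lemma tendsto_thetaCoeff (ha : ‖a‖ < 1) (n : ℤ) :
    Tendsto (fun N => thetaCoeff a N n) atTop (𝓝 1) := by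
  have hlow : Tendsto (fun N => N - n.natAbs + 1) atTop atTop :=
    tendsto_atTop_atTop.mpr fun b => ⟨b + n.natAbs, fun N hN => by omega⟩
  have hhigh : Tendsto (fun N => N + n.natAbs + 1) atTop atTop :=
    tendsto_atTop_atTop.mpr fun b => ⟨b, fun N hN => by omega⟩
  have h := (tendsto_prod_Ico_one_sub_pow ha (hi := fun N => 2 * N + 1) hhigh).mul
    (tendsto_prod_Ico_one_sub_pow ha (hi := fun N => N + 1) hlow)
  rw [mul_one] at h
  refine h.congr' ?_
  filter_upwards [eventually_ge_atTop n.natAbs] with N hN using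
    (thetaCoeff_eq_prod (fun i => pow_ne_one_of_norm_lt_one ha) hN).symm

lemma norm_zpow_sq_le (ha : ‖a‖ ≤ 1) (n : ℤ) : ‖a ^ (n ^ 2)‖ ≤ ‖a‖ ^ n.natAbs := by
  rw [← Int.natAbs_sq, ← Nat.cast_pow, zpow_natCast, norm_pow]
  exact pow_le_pow_of_le_one (norm_nonneg a) ha (Nat.le_self_pow two_ne_zero _)

lemma summable_pow_natAbs (ha : ‖a‖ < 1) : Summable fun n : ℤ => ‖a‖ ^ n.natAbs :=
  summable_int_iff_summable_nat_and_neg.mpr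
    ⟨by simpa using summable_geometric_of_lt_one (norm_nonneg a) ha,
      by simpa using summable_geometric_of_lt_one (norm_nonneg a) ha⟩

lemma multipliable_one_sub_pow_comp [CompleteSpace 𝕜] (ha : ‖a‖ < 1) {e : ℕ → ℕ}
    (he : Function.Injective e) : Multipliable fun d => 1 - a ^ e d := by
  have h : Summable fun d => ‖-a ^ e d‖ := by
    simpa [Function.comp_def] using
      (summable_geometric_of_lt_one (norm_nonneg a) ha).comp_injective he
  simpa [sub_eq_add_neg] using multipliable_one_add_of_summable h

end Normed

/-- The Jacobi theta product identity
`θ₀₁(0,τ) = Σ_{n∈ℤ} (−1)ⁿ qⁿ² = ∏_{d=1}^∞ (1−q^{2d})(1−q^{2d−1})²` for `|q| < 1`,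
where `q = e^{πiτ}`. -/
theorem theta01_triple_product (q : ℂ) (hq : ‖q‖ < 1) :
    (∑' n : ℤ, (-1 : ℂ) ^ n * q ^ (n ^ 2)) =
      ∏' d : ℕ, (1 - q ^ (2 * (d + 1))) * (1 - q ^ (2 * (d + 1) - 1)) ^ 2 := by
  rcases eq_or_ne q 0 with rfl | hq0
  · simp [zero_zpow_eq, Nat.mul_succ]
  have hq2 : ‖q ^ 2‖ < 1 := by rw [norm_pow]; exact pow_lt_one₀ (norm_nonneg q) hq two_ne_zero
  have hpartial (N : ℕ) : ∑' n : ℤ, (-1) ^ n * q ^ (n ^ 2) * thetaCoeff (q ^ 2) N n =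
      ∏ j ∈ range N, (1 - q ^ (2 * (j + 1))) * (1 - q ^ (2 * (j + 1) - 1)) ^ 2 := by
    rw [prod_eq_sum_thetaCoeff hq0, tsum_eq_sum fun n hn => ?_]
    rw [thetaCoeff_eq_zero _ (by rw [mem_Icc] at hn; omega), mul_zero]
  have hbound (N : ℕ) (n : ℤ) : ‖(-1) ^ n * q ^ (n ^ 2) * thetaCoeff (q ^ 2) N n‖ ≤
      Real.exp (1 / (1 - ‖q ^ 2‖)) ^ 2 * ‖q‖ ^ n.natAbs := by
    rw [norm_mul, norm_mul, norm_zpow, norm_neg, norm_one, one_zpow, one_mul, mul_comm]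
    exact mul_le_mul (norm_thetaCoeff_le hq2 N n) (norm_zpow_sq_le hq.le n) (norm_nonneg _)
      (by positivity)
  have hlim := tendsto_tsum_of_dominated_convergence
    ((summable_pow_natAbs hq).mul_left (Real.exp (1 / (1 - ‖q ^ 2‖)) ^ 2))
    (fun n => by simpa using (tendsto_thetaCoeff hq2 n).const_mul ((-1 : ℂ) ^ n * q ^ (n ^ 2)))
    (Eventually.of_forall hbound)
  simp only [hpartial] at hlim
  have hmult := (multipliable_one_sub_pow_comp hq (e := fun d => 2 * (d + 1))
    fun _ _ h => by simp only at h; omega).mul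
    ((multipliable_one_sub_pow_comp hq (e := fun d => 2 * (d + 1) - 1)
      fun _ _ h => by simp only at h; omega).pow 2)
  exact tendsto_nhds_unique hlim hmult.hasProd.tendsto_prod_nat
end
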